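/- For every nonnegative integer k, every nonnegative real number r, and every positive real number ℓ, there exists a positive real number N such that the following holds. Let (G,φ) be a (0,ℓ]-bounded weighted graph, let m be a positive integer, and let R ⊆ V(G). If V(G)−R is (k,r)-centered in (G,φ), i.e., there exists S ⊆ V(G) with |S| ≤ k such that V(G)−R ⊆ N_{(G,φ)}^{≤r}[S], then every m-coloring of (G,φ)^ℓ − R has weak diameter in (G,φ)^ℓ at most N. -/

import Mathlib

open scoped ENNReal

/-- The length of a walk in an edge-weighted graph: the sum of the weights of its edges. -/
def walkLen {V : Type} {G : SimpleGraph V} (w : Sym2 V → ℝ) {x y : V} (p : G.Walk x y) : ℝ :=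
  (p.edges.map w).sum

/-- The distance between two vertices of an edge-weighted graph: the infimum of the lengths
of paths between them (`⊤` if there is no such path). -/
noncomputable def wDist {V : Type} (G : SimpleGraph V) (w : Sym2 V → ℝ) (x y : V) : ℝ≥0∞ :=
  ⨅ q : {q : G.Walk x y // q.IsPath}, ENNReal.ofReal (walkLen w q.1)

lemma wDist_comm {V : Type} (G : SimpleGraph V) (w : Sym2 V → ℝ) (x y : V) :
    wDist G w x y = wDist G w y x := by
  have key : ∀ a b : V, wDist G w a b ≤ wDist G w b a := by
    intro a b
    refine le_iInf fun q => ?_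
    refine iInf_le_of_le ⟨q.1.reverse, q.2.reverse⟩ ?_
    simp [walkLen, List.sum_reverse]
  exact le_antisymm (key x y) (key y x)

/-- The power graph: two distinct vertices are adjacent iff their weighted distance
is at most `r`. -/
noncomputable def powerGraph {V : Type} (G : SimpleGraph V) (w : Sym2 V → ℝ) (r : ℝ) :
    SimpleGraph V where
  Adj x y := x ≠ y ∧ wDist G w x y ≤ ENNReal.ofReal r
  symm := by
    refine ⟨?_⟩
    rintro x y ⟨hne, hle⟩
    exact ⟨hne.symm, by rwa [wDist_comm]⟩
  loopless := ⟨fun x h => h.1 rfl⟩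

/-- The unit-length (hop) distance in an unweighted graph. -/
noncomputable def hopDist {V : Type} (L : SimpleGraph V) (x y : V) : ℝ≥0∞ :=
  ⨅ q : L.Walk x y, (q.length : ℝ≥0∞)

/-- Same-colour adjacency within a vertex set `A`. -/
def colorGraph {V : Type} (K : SimpleGraph V) (A : Set V) {m : ℕ} (c : V → Fin m) :
    SimpleGraph V where
  Adj x y := K.Adj x y ∧ x ∈ A ∧ y ∈ A ∧ c x = c y
  symm := by
    refine ⟨?_⟩
    rintro x y ⟨h, hx, hy, hc⟩
    exact ⟨h.symm, hy, hx, hc.symm⟩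
  loopless := ⟨fun x h => K.loopless.irrefl x h.1⟩

/-- The colouring `c` of the subgraph of `K` induced on `A` has weak diameter, measured by the
hop distance of `L`, at most `N`: any two vertices of a monochromatic component of `K ↾ A` are
at hop distance at most `N` in `L`. -/
def HasWeakDiamLE {V : Type} (K : SimpleGraph V) (A : Set V) (L : SimpleGraph V) {m : ℕ}
    (c : V → Fin m) (N : ℝ) : Prop :=
  ∀ x ∈ A, ∀ y ∈ A, (colorGraph K A c).Reachable x y → hopDist L x y ≤ ENNReal.ofReal N

/-- `nbhd G w r S`: vertices joined to `S` by a path of weighted length at most `r`. -/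
def nbhd {V : Type} (G : SimpleGraph V) (w : Sym2 V → ℝ) (r : ℝ) (S : Set V) : Set V :=
  {v | ∃ s ∈ S, ∃ q : G.Walk v s, q.IsPath ∧ walkLen w q ≤ r}

/-- Deleting a set of vertices (keeping them as isolated vertices of the ambient type). -/
def delVerts {V : Type} (G : SimpleGraph V) (Z : Set V) : SimpleGraph V where
  Adj x y := G.Adj x y ∧ x ∉ Z ∧ y ∉ Z
  symm := by
    refine ⟨?_⟩
    rintro x y ⟨h, hx, hy⟩
    exact ⟨h.symm, hy, hx⟩
  loopless := ⟨fun x h => G.loopless.irrefl x h.1⟩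

/-- A weighted graph: a finite simple graph together with positive edge weights. -/
structure WGraph : Type 1 where
  V : Type
  fin : Finite V
  G : SimpleGraph V
  w : Sym2 V → ℝ
  pos : ∀ e ∈ G.edgeSet, 0 < w e

/-- The extended metric on the vertex set of a weighted graph. -/
noncomputable def WGraph.dist (W : WGraph) : W.V → W.V → ℝ≥0∞ := wDist W.G W.w

/-- All edge weights lie in `(0, ℓ]`. -/
def WGraph.IsBounded (W : WGraph) (ℓ : ℝ) : Prop := ∀ e ∈ W.G.edgeSet, W.w e ≤ ℓ

/-- `f` is an `n`-dimensional control function for the extended metric `d`. -/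
def IsControlOn {X : Type} (d : X → X → ℝ≥0∞) (n : ℕ) (f : ℝ → ℝ) : Prop :=
  ∀ r : ℝ, 0 < r → ∃ U : Fin (n + 1) → Set (Set X),
    (∀ x : X, ∃ i, ∃ s ∈ U i, x ∈ s) ∧
    (∀ i, ∀ s ∈ U i, ∀ t ∈ U i, s ≠ t → ∀ x ∈ s, ∀ y ∈ t, ENNReal.ofReal r < d x y) ∧
    (∀ i, ∀ s ∈ U i, ∀ x ∈ s, ∀ y ∈ s, d x y ≤ ENNReal.ofReal (f r))

/-- The asymptotic dimension of a class of weighted graphs is at most `n`. -/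
def asdimLE (F : Set WGraph) (n : ℕ) : Prop :=
  ∃ f : ℝ → ℝ, (∀ x, 0 < x → 0 < f x) ∧ ∀ W ∈ F, IsControlOn W.dist n f

/-- The Assouad–Nagata dimension of a class of weighted graphs is at most `n`:
some dilation is a common `n`-dimensional control function. -/
def ANdimLE (F : Set WGraph) (n : ℕ) : Prop :=
  ∃ (f : ℝ → ℝ) (c : ℝ), 0 < c ∧ (∀ x, 0 < x → 0 < f x) ∧ (∀ x, 0 < x → f x ≤ c * x) ∧
    ∀ W ∈ F, IsControlOn W.dist n f

/-- `H` is a minor of `G`: there are pairwise disjoint nonempty connected branch sets in `G`,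
one for each vertex of `H`, with branch sets of adjacent vertices joined by an edge. -/
def IsMinorOf {α β : Type} (H : SimpleGraph β) (G : SimpleGraph α) : Prop :=
  ∃ B : β → Set α,
    (∀ h, (B h).Nonempty) ∧
    (∀ h h', h ≠ h' → Disjoint (B h) (B h')) ∧
    (∀ h, (G.induce (B h)).Connected) ∧
    (∀ h h', H.Adj h h' → ∃ a ∈ B h, ∃ b ∈ B h', G.Adj a b)


/-! Send every vertex outside `R` to a centre in `S` within `n = ⌊2r/ℓ⌋₊ + 1` hops of the power
graph: greedily cutting a path of weight at most `r` into pieces of weight at most `ℓ`, any two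
consecutive pieces weigh more than `ℓ`. Along a monochromatic walk, consecutive vertices are
adjacent, so their centres are at most `2n + 1` hops apart. Hence the centres of the two ends of
the walk are joined by a chain of centres with steps of at most `2n + 1` hops; shortening it to a
chain without repetitions leaves at most `|S| ≤ k` steps. -/

open SimpleGraph

section WeightedWalks

variable {V : Type} {G : SimpleGraph V} {w : Sym2 V → ℝ}

@[simp]
lemma walkLen_nil {x : V} : walkLen w (Walk.nil : G.Walk x x) = 0 := by
  simp [walkLen]

@[simp]
lemma walkLen_cons {x y z : V} (h : G.Adj x y) (p : G.Walk y z) :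
    walkLen w (Walk.cons h p) = w s(x, y) + walkLen w p := by
  simp [walkLen]

lemma walkLen_nonneg (hw : ∀ e ∈ G.edgeSet, 0 ≤ w e) {x y : V} (q : G.Walk x y) :
    0 ≤ walkLen w q :=
  List.sum_nonneg <| by simpa using fun e he => hw e (q.edges_subset_edgeSet he)

lemma wDist_le_walkLen (hw : ∀ e ∈ G.edgeSet, 0 ≤ w e) {x y : V} (q : G.Walk x y) :
    wDist G w x y ≤ ENNReal.ofReal (walkLen w q) := by
  classical
  refine (iInf_le _ ⟨q.bypass, q.bypass_isPath⟩).trans (ENNReal.ofReal_le_ofReal ?_)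
  exact (q.edges_bypass_sublist_edges.map w).sum_le_sum <| by
    simpa using fun e he => hw e (q.edges_subset_edgeSet he)

end WeightedWalks

section PowerGraph

variable {V : Type} {G : SimpleGraph V} {w : Sym2 V → ℝ} {ℓ : ℝ}

lemma edist_powerGraph_le_one (hw : ∀ e ∈ G.edgeSet, 0 ≤ w e) {x y : V} (q : G.Walk x y)
    (hq : walkLen w q ≤ ℓ) : (powerGraph G w ℓ).edist x y ≤ 1 := by
  rcases eq_or_ne x y with rfl | hne
  · simp
  · have hadj : (powerGraph G w ℓ).Adj x y :=
      ⟨hne, (wDist_le_walkLen hw q).trans (ENNReal.ofReal_le_ofReal hq)⟩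
    exact (edist_eq_one_iff_adj.mpr hadj).le

/-- The greedy decomposition, run from the far end of the walk: `q₁` is the current first piece
and every two further hops account for weight more than `ℓ`. -/
lemma exists_prefix_edist_powerGraph_le (hw : ∀ e ∈ G.edgeSet, 0 ≤ w e)
    (hwℓ : ∀ e ∈ G.edgeSet, w e ≤ ℓ) (hℓ : 0 ≤ ℓ) {x y : V} (q : G.Walk x y) :
    ∃ (z : V) (q₁ : G.Walk x z) (j : ℕ), walkLen w q₁ ≤ ℓ ∧
      (powerGraph G w ℓ).edist z y ≤ j ∧ ℓ * j ≤ 2 * (walkLen w q - walkLen w q₁) := by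
  induction q with
  | nil => exact ⟨_, Walk.nil, 0, by simpa using hℓ, by simp, by simp⟩
  | @cons x b y h p ih =>
    obtain ⟨z, q₁, j, hq₁, hzy, hj⟩ := ih
    have hxb : w s(x, b) ≤ ℓ := hwℓ _ h
    by_cases hext : w s(x, b) + walkLen w q₁ ≤ ℓ
    · exact ⟨z, Walk.cons h q₁, j, by simpa using hext, hzy, by simp only [walkLen_cons]; linarith⟩
    · refine ⟨x, Walk.nil, j + 2, by simpa using hℓ, ?_, ?_⟩
      · calc (powerGraph G w ℓ).edist x y
            ≤ (powerGraph G w ℓ).edist x b + (powerGraph G w ℓ).edist b z +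
                (powerGraph G w ℓ).edist z y :=
              SimpleGraph.edist_triangle.trans (add_le_add SimpleGraph.edist_triangle le_rfl)
          _ ≤ 1 + 1 + j := by
            gcongr
            · exact edist_powerGraph_le_one hw (Walk.cons h Walk.nil) (by simpa using hxb)
            · exact edist_powerGraph_le_one hw q₁ hq₁
          _ = (j + 2 : ℕ) := by push_cast; ring
      · simp only [walkLen_cons, walkLen_nil, Nat.cast_add, Nat.cast_ofNat]
        nlinarith

lemma edist_powerGraph_le_of_walkLen_le (hw : ∀ e ∈ G.edgeSet, 0 ≤ w e)
    (hwℓ : ∀ e ∈ G.edgeSet, w e ≤ ℓ) (hℓ : 0 < ℓ) {r : ℝ} {x y : V} (q : G.Walk x y)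
    (hq : walkLen w q ≤ r) : (powerGraph G w ℓ).edist x y ≤ (⌊2 * r / ℓ⌋₊ + 1 : ℕ) := by
  obtain ⟨z, q₁, j, hq₁, hzy, hj⟩ := exists_prefix_edist_powerGraph_le hw hwℓ hℓ.le q
  have hjr : j ≤ ⌊2 * r / ℓ⌋₊ := Nat.le_floor <| by
    rw [le_div_iff₀ hℓ]
    nlinarith [walkLen_nonneg hw q₁]
  calc (powerGraph G w ℓ).edist x y
      ≤ (powerGraph G w ℓ).edist x z + (powerGraph G w ℓ).edist z y := SimpleGraph.edist_triangle
    _ ≤ 1 + j := add_le_add (edist_powerGraph_le_one hw q₁ hq₁) hzy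
    _ ≤ (⌊2 * r / ℓ⌋₊ + 1 : ℕ) := by
      rw [add_comm]
      exact_mod_cast Nat.add_le_add_right hjr 1

end PowerGraph

section CentreChains

variable {V : Type} {P : SimpleGraph V}

lemma edist_le_length_mul {U : Type} {Q : SimpleGraph U} {f : U → V} {D : ℕ}
    (hQ : ∀ a b, Q.Adj a b → P.edist (f a) (f b) ≤ D) {a b : U} (p : Q.Walk a b) :
    P.edist (f a) (f b) ≤ p.length * D := by
  induction p with
  | nil => simp
  | @cons a c b h p ih =>
    calc P.edist (f a) (f b) ≤ P.edist (f a) (f c) + P.edist (f c) (f b) :=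
          SimpleGraph.edist_triangle
      _ ≤ D + p.length * D := add_le_add (hQ a c h) ih
      _ = (Walk.cons h p).length * D := by simp only [Walk.length_cons]; push_cast; ring

def centreGraph (P : SimpleGraph V) (S : Set V) (D : ℕ) : SimpleGraph S :=
  SimpleGraph.fromRel fun s t => P.edist s t ≤ D

lemma centreGraph_reachable_of_edist_le {S : Set V} {D : ℕ} {s t : S}
    (h : P.edist s t ≤ D) : (centreGraph P S D).Reachable s t := by
  rcases eq_or_ne s t with rfl | hne
  · rfl
  · exact Adj.reachable ⟨hne, Or.inl h⟩

lemma edist_le_of_centreGraph_adj {S : Set V} {D : ℕ} {s t : S}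
    (h : (centreGraph P S D).Adj s t) : P.edist s t ≤ D := by
  rcases h.2 with h | h
  · exact h
  · rwa [SimpleGraph.edist_comm]

lemma edist_le_of_centreGraph_reachable {S : Set V} (hS : S.Finite) {D : ℕ} {s t : S}
    (h : (centreGraph P S D).Reachable s t) : P.edist s t ≤ (S.ncard * D : ℕ) := by
  have := hS.fintype
  obtain ⟨p, hp⟩ := h.exists_isPath
  have hlen : p.length ≤ S.ncard := by
    rw [← Nat.card_coe_set_eq, Nat.card_eq_fintype_card]
    exact hp.length_lt.le
  calc P.edist s t ≤ p.length * D :=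
        edist_le_length_mul (fun _ _ => edist_le_of_centreGraph_adj) p
    _ ≤ (S.ncard * D : ℕ) := by exact_mod_cast Nat.mul_le_mul_right D hlen

lemma centreGraph_reachable_of_walk {S : Set V} {n : ℕ} {x y : V} (p : P.Walk x y)
    (hnear : ∀ v ∈ p.support, ∃ s ∈ S, P.edist v s ≤ n) (s t : S)
    (hs : P.edist x s ≤ n) (ht : P.edist y t ≤ n) :
    (centreGraph P S (2 * n + 1)).Reachable s t := by
  induction p generalizing s with
  | nil =>
    refine centreGraph_reachable_of_edist_le ?_
    calc P.edist s t ≤ P.edist s _ + P.edist _ t := SimpleGraph.edist_triangle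
      _ ≤ n + n := add_le_add (by rwa [SimpleGraph.edist_comm]) ht
      _ ≤ (2 * n + 1 : ℕ) := by push_cast; rw [two_mul]; exact le_self_add
  | @cons x z y h p ih =>
    obtain ⟨s', hs'S, hs'⟩ := hnear z (by simp)
    refine .trans (centreGraph_reachable_of_edist_le ?_)
      (ih (fun v hv => hnear v (by simp [hv])) ⟨s', hs'S⟩ hs' ht)
    calc P.edist s s' ≤ P.edist s x + P.edist x z + P.edist z s' :=
          SimpleGraph.edist_triangle.trans (add_le_add SimpleGraph.edist_triangle le_rfl)
      _ ≤ n + 1 + n := by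
        gcongr
        · rwa [SimpleGraph.edist_comm]
        · exact (edist_eq_one_iff_adj.mpr h).le
      _ = (2 * n + 1 : ℕ) := by push_cast; ring

lemma edist_le_of_walk_near {S : Set V} (hS : S.Finite) {n : ℕ} {x y : V} (p : P.Walk x y)
    (hnear : ∀ v ∈ p.support, ∃ s ∈ S, P.edist v s ≤ n) :
    P.edist x y ≤ (2 * n + S.ncard * (2 * n + 1) : ℕ) := by
  obtain ⟨s, hsS, hs⟩ := hnear x p.start_mem_support
  obtain ⟨t, htS, ht⟩ := hnear y p.end_mem_support
  have hst := edist_le_of_centreGraph_reachable hS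
    (centreGraph_reachable_of_walk p hnear ⟨s, hsS⟩ ⟨t, htS⟩ hs ht)
  calc P.edist x y ≤ P.edist x s + P.edist s t + P.edist t y :=
        SimpleGraph.edist_triangle.trans (add_le_add SimpleGraph.edist_triangle le_rfl)
    _ ≤ n + (S.ncard * (2 * n + 1) : ℕ) + n := by
        gcongr
        rwa [SimpleGraph.edist_comm]
    _ = (2 * n + S.ncard * (2 * n + 1) : ℕ) := by push_cast; ring

end CentreChains

lemma hopDist_eq_edist {V : Type} (L : SimpleGraph V) (x y : V) :
    hopDist L x y = L.edist x y := by
  simp [hopDist, SimpleGraph.edist]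

lemma colorGraph_le {V : Type} (K : SimpleGraph V) (A : Set V) {m : ℕ} (c : V → Fin m) :
    colorGraph K A c ≤ K :=
  fun _ _ h => h.1

lemma mem_of_mem_support_colorGraph_walk {V : Type} {K : SimpleGraph V} {A : Set V} {m : ℕ}
    {c : V → Fin m} {x y : V} (T : (colorGraph K A c).Walk x y) (hx : x ∈ A) :
    ∀ v ∈ T.support, v ∈ A := by
  induction T with
  | nil => simpa using hx
  | cons h T ih =>
    simpa [hx] using ih h.2.2.1

theorem all_centered_general (k : ℕ) (r : ℝ) (ℓ : ℝ) (hℓ : 0 < ℓ) :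
    ∃ N : ℝ, 0 < N ∧
      ∀ W : WGraph, W.IsBounded ℓ → ∀ m : ℕ, 0 < m → ∀ R : Set W.V,
        (∃ S : Set W.V, S.ncard ≤ k ∧ Rᶜ ⊆ nbhd W.G W.w r S) →
        ∀ c : W.V → Fin m,
          HasWeakDiamLE (powerGraph W.G W.w ℓ) Rᶜ (powerGraph W.G W.w ℓ) c N := by
  set n := ⌊2 * r / ℓ⌋₊ + 1
  refine ⟨(2 * n + k * (2 * n + 1) : ℕ), by positivity, ?_⟩
  intro W hbd m _ R ⟨S, hSk, hcov⟩ c x hx y _ ⟨T⟩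
  have hw : ∀ e ∈ W.G.edgeSet, 0 ≤ W.w e := fun e he => (W.pos e he).le
  let T' := T.mapLe (colorGraph_le _ _ c)
  have hnear : ∀ v ∈ T'.support, ∃ s ∈ S, (powerGraph W.G W.w ℓ).edist v s ≤ n := by
    intro v hv
    rw [Walk.support_mapLe_eq_support] at hv
    obtain ⟨s, hs, q, -, hq⟩ := hcov (mem_of_mem_support_colorGraph_walk T hx v hv)
    exact ⟨s, hs, edist_powerGraph_le_of_walkLen_le hw hbd hℓ q hq⟩
  have := W.fin
  have hcard : (2 * n + S.ncard * (2 * n + 1) : ℕ) ≤ 2 * n + k * (2 * n + 1) := by gcongr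
  rw [hopDist_eq_edist, ENNReal.ofReal_natCast]
  exact_mod_cast (edist_le_of_walk_near S.toFinite T' hnear).trans (by exact_mod_cast hcard)

/-- Theorem (Lemma `all_centered`): if `V(G) − R` is `(k,r)`-centered in `(G,φ)`, then every
`m`-colouring of `(G,φ)^ℓ − R` has weak diameter in `(G,φ)^ℓ` at most `N`, where `N` depends
only on `k`, `r` and `ℓ`. -/
theorem all_centered (k : ℕ) (r : ℝ) (hr : 0 ≤ r) (ℓ : ℝ) (hℓ : 0 < ℓ) :
    ∃ N : ℝ, 0 < N ∧
      ∀ W : WGraph, W.IsBounded ℓ → ∀ m : ℕ, 0 < m → ∀ R : Set W.V,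
        (∃ S : Set W.V, S.ncard ≤ k ∧ Rᶜ ⊆ nbhd W.G W.w r S) →
        ∀ c : W.V → Fin m,
          HasWeakDiamLE (powerGraph W.G W.w ℓ) Rᶜ (powerGraph W.G W.w ℓ) c N :=
  all_centered_general k r ℓ hℓ
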